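/- arXiv:1304.0524 — 2 statements merged into one kernel-verified Lean document; each statement's English description precedes it below -/
import Mathlib

section
/- Let p be the origin in ℝ^d, let V ⊂ ℝ^d be a compact convex set containing p, and let q ∈ V maximize ‖q‖ over V. Let C ⊂ S^{d−1} be an η-cage, i.e., for every unit vector x there is c ∈ C with ‖x − c‖ ≤ η. For each c ∈ C let z_c ∈ V satisfy ⟨z_c, c⟩ ≥ (1−ε)·max_{x∈V}⟨x, c⟩. Then z := argmax_{c∈C} ‖z_c‖ satisfies ‖z‖ ≥ (1−ε)(1−η²/2)·‖q‖. -/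
open scoped RealInnerProductSpace

/-- Approximate farthest corner via an η-cage: taking the farthest among approximate
maximizers `z c` over all cage directions `c ∈ C` gives a
`(1-ε)(1-η²/2)`-approximation of the farthest point `q` of `V`. -/
theorem stmt_4 {d : ℕ} (η ε : ℝ) (hη0 : 0 < η) (hη1 : η ≤ 1) (hε0 : 0 ≤ ε) (hε1 : ε < 1)
    (V : Set (EuclideanSpace ℝ (Fin d))) (hVc : IsCompact V) (hconv : Convex ℝ V)
    (h0 : (0 : EuclideanSpace ℝ (Fin d)) ∈ V)
    (q : EuclideanSpace ℝ (Fin d)) (hq : q ∈ V) (hqmax : ∀ x ∈ V, ‖x‖ ≤ ‖q‖)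
    (C : Finset (EuclideanSpace ℝ (Fin d))) (hCunit : ∀ c ∈ C, ‖c‖ = 1)
    (hcage : ∀ x : EuclideanSpace ℝ (Fin d), ‖x‖ = 1 → ∃ c ∈ C, dist x c ≤ η)
    (z : EuclideanSpace ℝ (Fin d) → EuclideanSpace ℝ (Fin d))
    (hzV : ∀ c ∈ C, z c ∈ V)
    (hzc : ∀ c ∈ C, ∀ x ∈ V, (1 - ε) * ⟪x, c⟫ ≤ ⟪z c, c⟫)
    (zstar : EuclideanSpace ℝ (Fin d)) (hzstar : ∃ c ∈ C, zstar = z c)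
    (hmax : ∀ c ∈ C, ‖z c‖ ≤ ‖zstar‖) :
    (1 - ε) * (1 - η ^ 2 / 2) * ‖q‖ ≤ ‖zstar‖ := by
  have hη2 : η ^ 2 ≤ 1 := by nlinarith
  have hfac : (0:ℝ) ≤ (1 - ε) * (1 - η ^ 2 / 2) := by nlinarith
  rcases eq_or_ne q 0 with hq0 | hq0
  · rw [hq0, norm_zero, mul_zero]
    exact norm_nonneg _
  · have hqn : 0 < ‖q‖ := norm_pos_iff.mpr hq0
    set u := ‖q‖⁻¹ • q with hu
    have hun : ‖u‖ = 1 := by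
      rw [hu, norm_smul, norm_inv, norm_norm, inv_mul_cancel₀ hqn.ne']
    obtain ⟨c, hcC, hdc⟩ := hcage u hun
    have hc1 : ‖c‖ = 1 := hCunit c hcC
    have huc : (1 - η ^ 2 / 2) ≤ ⟪u, c⟫ := by
      have h := norm_sub_sq_real u c
      rw [hun, hc1] at h
      have hd : ‖u - c‖ ≤ η := by rwa [dist_eq_norm] at hdc
      nlinarith [norm_nonneg (u - c)]
    have hqc : (1 - η ^ 2 / 2) * ‖q‖ ≤ ⟪q, c⟫ := by
      have : ⟪u, c⟫ = ‖q‖⁻¹ * ⟪q, c⟫ := by rw [hu, real_inner_smul_left]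
      rw [this] at huc
      have := mul_le_mul_of_nonneg_left huc hqn.le
      rw [mul_comm (1 - η ^ 2 / 2) ‖q‖]
      calc ‖q‖ * (1 - η ^ 2 / 2) ≤ ‖q‖ * (‖q‖⁻¹ * ⟪q, c⟫) := this
        _ = ⟪q, c⟫ := by field_simp
    have h1 : (1 - ε) * ⟪q, c⟫ ≤ ⟪z c, c⟫ := hzc c hcC q hq
    have h2 : ⟪z c, c⟫ ≤ ‖z c‖ := by
      have := real_inner_le_norm (z c) c
      rwa [hc1, mul_one] at this
    have h3 : ‖z c‖ ≤ ‖zstar‖ := hmax c hcC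
    have hεn : (0:ℝ) ≤ 1 - ε := by linarith
    nlinarith [mul_le_mul_of_nonneg_left hqc hεn]
end

section
/- Let w be the apex (at the origin) of the cone in ℝ^d over the ball B = ball(p, r), where p = (a, 0, …, 0, s) with s > r ≥ 0 and a ∈ ℝ (so s² + a² > r²). For t with r ≤ t < s, the volume of the intersection of this cone with the slab {x ∈ ℝ^d : 0 ≤ x_d ≤ s − t} is at least (1/d)·C_{d−1}·r^{d−1}·(s−t)^d / (s² − r²)^{(d−1)/2}, where C_{d−1} is the volume of the unit (d−1)-ball. -/
/-!
Write points of `ℝ^(d+1)` as `(x, l)` with `l` the last coordinate, and `p = (q, s)`.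
A point `z` lies in the cone over `closedBall p r` (segments from the origin) as soon as
`0 ≤ ⟪z, p⟫ ≤ ‖p‖² - r²` and `‖z‖² (‖p‖² - r²) ≤ ⟪z, p⟫²`. For `0 ≤ l ≤ s - r` these hold on the
ball of radius `l r / √(s² - r²)` around `(l s / (s² - r²)) q` at height `l`: this is the ball
inscribed in the elliptic slice of the cone, its radius being the smaller semiaxis. Cavalieri's
principle then bounds the volume of the truncated cone below by
`∫₀^(s-t) C_d (l r / √(s² - r²))^d dl`, which is the claimed quantity.
-/

open MeasureTheory Metric Set Module
open scoped RealInnerProductSpace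

section ObliqueCone

variable {E : Type*} [NormedAddCommGroup E] [NormedSpace ℝ E]

def obliqueCone (v : E) (k T : ℝ) : Set (ℝ × E) :=
  {y | y.1 ∈ Icc 0 T ∧ y.2 ∈ closedBall (y.1 • v) (y.1 * k)}

theorem isClosed_obliqueCone (v : E) (k T : ℝ) : IsClosed (obliqueCone v k T) :=
  ((isClosed_le continuous_const continuous_fst).inter
    (isClosed_le continuous_fst continuous_const)).inter
    (isClosed_le (continuous_snd.dist (continuous_fst.smul continuous_const))
      (continuous_fst.mul continuous_const))

theorem volume_obliqueCone [FiniteDimensional ℝ E] [MeasurableSpace E] [BorelSpace E]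
    (μ : Measure E) [μ.IsAddHaarMeasure] (v : E) {k T : ℝ} (hk : 0 ≤ k) (hT : 0 ≤ T) :
    (volume.prod μ) (obliqueCone v k T) = ENNReal.ofReal
      (T ^ (finrank ℝ E + 1) / (finrank ℝ E + 1) * k ^ finrank ℝ E) * μ (ball 0 1) := by
  set n := finrank ℝ E
  have hslice : ∀ l, μ (Prod.mk l ⁻¹' obliqueCone v k T) =
      (Icc 0 T).indicator (fun l => ENNReal.ofReal (l ^ n * k ^ n) * μ (ball 0 1)) l := by
    intro l
    by_cases hl : l ∈ Icc 0 T
    · have : Prod.mk l ⁻¹' obliqueCone v k T = closedBall (l • v) (l * k) := by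
        ext x; simp only [obliqueCone, mem_preimage, mem_ofPred_eq, hl, true_and]
      rw [indicator_of_mem hl, this, Measure.addHaar_closedBall μ _ (mul_nonneg hl.1 hk), mul_pow]
    · have : Prod.mk l ⁻¹' obliqueCone v k T = ∅ := by
        ext x
        simp only [obliqueCone, mem_preimage, mem_ofPred_eq, hl, false_and, mem_empty_iff_false]
      rw [indicator_of_notMem hl, this, measure_empty]
  have hint : ∫ l in Icc 0 T, l ^ n * k ^ n = T ^ (n + 1) / (n + 1) * k ^ n := by
    rw [integral_Icc_eq_integral_Ioc, ← intervalIntegral.integral_of_le hT,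
      intervalIntegral.integral_mul_const, integral_pow]
    norm_num
  rw [Measure.prod_apply (isClosed_obliqueCone v k T).measurableSet]
  simp_rw [hslice]
  rw [lintegral_indicator measurableSet_Icc, lintegral_mul_const _ (by fun_prop), ← hint,
    ofReal_integral_eq_lintegral_ofReal (by fun_prop : Continuous _).integrableOn_Icc
      ((ae_restrict_mem measurableSet_Icc).mono fun l hl => by have := hl.1; positivity)]

end ObliqueCone

section InnerProduct

variable {F : Type*} [NormedAddCommGroup F] [InnerProductSpace ℝ F]

theorem exists_smul_mem_closedBall_of_inner {z p : F} {r : ℝ} (hr : 0 ≤ r)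
    (hp : r ^ 2 < ‖p‖ ^ 2) (h₀ : 0 ≤ ⟪z, p⟫) (h₁ : ⟪z, p⟫ ≤ ‖p‖ ^ 2 - r ^ 2)
    (h₂ : ‖z‖ ^ 2 * (‖p‖ ^ 2 - r ^ 2) ≤ ⟪z, p⟫ ^ 2) :
    ∃ μ ∈ Icc (0 : ℝ) 1, ∃ y ∈ closedBall p r, z = μ • y := by
  set D := ‖p‖ ^ 2 - r ^ 2
  have hD : 0 < D := sub_pos.2 hp
  rcases h₀.eq_or_lt with h | h
  · have hz : ‖z‖ ^ 2 ≤ 0 := by rw [← h] at h₂; nlinarith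
    refine ⟨0, ⟨le_rfl, zero_le_one⟩, p, mem_closedBall_self hr, ?_⟩
    simpa using hz
  · -- scale `z` so that `⟪y, p⟫ = ‖p‖² - r²`, the value at the tangency points of the cone
    set c := D / ⟪z, p⟫
    have hc : 0 < c := div_pos hD h
    have hcz : c * ⟪z, p⟫ = D := div_mul_cancel₀ D h.ne'
    have hcz2 : c ^ 2 * ‖z‖ ^ 2 ≤ D := by
      have : c ^ 2 * (‖z‖ ^ 2 * D) ≤ c ^ 2 * ⟪z, p⟫ ^ 2 := by gcongr
      nlinarith
    refine ⟨c⁻¹, ⟨inv_nonneg.2 hc.le, inv_le_one_of_one_le₀ ?_⟩, c • z, ?_, ?_⟩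
    · rw [le_div_iff₀ h, one_mul]; exact h₁
    · rw [mem_closedBall, dist_eq_norm, ← sq_le_sq₀ (norm_nonneg _) hr, norm_sub_sq_real,
        norm_smul, real_inner_smul_left, mul_pow, Real.norm_eq_abs, sq_abs]
      linarith
    · rw [smul_smul, inv_mul_cancel₀ hc.ne', one_smul]

theorem cone_inequalities_of_mem_closedBall {x q : F} {l s r : ℝ} (hr : 0 ≤ r) (hrs : r < s)
    (hl : 0 ≤ l) (hls : l ≤ s - r)
    (hx : x ∈ closedBall (l • (s / (s ^ 2 - r ^ 2)) • q) (l * (r / √(s ^ 2 - r ^ 2)))) :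
    0 ≤ ⟪x, q⟫ + l * s ∧ ⟪x, q⟫ + l * s ≤ ‖q‖ ^ 2 + (s ^ 2 - r ^ 2) ∧
      (‖x‖ ^ 2 + l ^ 2) * (‖q‖ ^ 2 + (s ^ 2 - r ^ 2)) ≤ (⟪x, q⟫ + l * s) ^ 2 := by
  set σ := √(s ^ 2 - r ^ 2)
  have hσ2 : σ ^ 2 = s ^ 2 - r ^ 2 := Real.sq_sqrt (by nlinarith)
  have hσ : 0 < σ := Real.sqrt_pos.2 (by nlinarith)
  rw [← hσ2] at hx ⊢
  have hK : 0 ≤ ‖q‖ ^ 2 + σ ^ 2 := by positivity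
  set c := l * s / σ ^ 2
  have hc : c * σ ^ 2 = l * s := div_mul_cancel₀ _ (by positivity)
  set ρ := l * (r / σ)
  have hρ : ρ * σ = l * r := by simp only [ρ]; field_simp
  set w := x - c • q
  have hxw : x = c • q + w := by simp [w]
  have hw : ‖w‖ ≤ ρ := by
    rwa [mem_closedBall, dist_eq_norm, smul_smul, ← mul_div_assoc] at hx
  set u := ⟪w, q⟫
  have hA : ⟪x, q⟫ + l * s = c * (‖q‖ ^ 2 + σ ^ 2) + u := by
    rw [hxw, inner_add_left, real_inner_smul_left, real_inner_self_eq_norm_sq, ← hc]; ring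
  have hAσ : (⟪x, q⟫ + l * s) * σ ^ 2 = l * s * (‖q‖ ^ 2 + σ ^ 2) + u * σ ^ 2 := by
    rw [hA, add_mul, mul_right_comm, hc]
  -- the offset `w` of `x` from the axis point `c • q` is controlled by Cauchy–Schwarz
  -- and `‖q‖σ ≤ ‖q‖² + σ²`
  have hu : |u| * σ ^ 2 ≤ l * r * (‖q‖ ^ 2 + σ ^ 2) := by
    have hq : ‖q‖ * σ ≤ ‖q‖ ^ 2 + σ ^ 2 := by nlinarith [sq_nonneg (‖q‖ - σ), norm_nonneg q]
    calc |u| * σ ^ 2 ≤ ρ * ‖q‖ * σ ^ 2 := by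
          gcongr
          exact (abs_real_inner_le_norm w q).trans (by gcongr)
      _ = l * r * (‖q‖ * σ) := by rw [← hρ]; ring
      _ ≤ l * r * (‖q‖ ^ 2 + σ ^ 2) := by gcongr
  have hwl : ‖w‖ ^ 2 + l ^ 2 ≤ c ^ 2 * σ ^ 2 := by
    refine le_of_mul_le_mul_right ?_ (by positivity : 0 < σ ^ 2)
    have hwσ : ‖w‖ ^ 2 * σ ^ 2 ≤ (l * r) ^ 2 := by rw [← hρ, mul_pow]; gcongr
    have hcσ : c ^ 2 * σ ^ 2 * σ ^ 2 = (l * s) ^ 2 := by rw [← hc]; ring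
    rw [hcσ]; nlinarith
  obtain ⟨hu₁, hu₂⟩ : -(l * r * (‖q‖ ^ 2 + σ ^ 2)) ≤ u * σ ^ 2 ∧
      u * σ ^ 2 ≤ l * r * (‖q‖ ^ 2 + σ ^ 2) := by
    rw [← abs_le, abs_mul, abs_of_pos (by positivity : 0 < σ ^ 2)]; exact hu
  refine ⟨le_of_mul_le_mul_right ?_ (by positivity : 0 < σ ^ 2),
    le_of_mul_le_mul_right ?_ (by positivity : 0 < σ ^ 2), ?_⟩
  · rw [hAσ, zero_mul]
    nlinarith [mul_nonneg (mul_nonneg hl (sub_nonneg.2 hrs.le)) hK]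
  · have hls' : l * (s + r) ≤ σ ^ 2 := by rw [hσ2]; nlinarith
    rw [hAσ]
    nlinarith [mul_le_mul_of_nonneg_right hls' hK]
  · have hxx : ‖x‖ ^ 2 = c ^ 2 * ‖q‖ ^ 2 + 2 * c * u + ‖w‖ ^ 2 := by
      rw [hxw, norm_add_sq_real, norm_smul, real_inner_smul_left, real_inner_comm,
        Real.norm_eq_abs, mul_pow, sq_abs]
      ring
    calc (‖x‖ ^ 2 + l ^ 2) * (‖q‖ ^ 2 + σ ^ 2)
        ≤ (c ^ 2 * (‖q‖ ^ 2 + σ ^ 2) + 2 * c * u) * (‖q‖ ^ 2 + σ ^ 2) := by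
          gcongr ?_ * _; nlinarith
      _ ≤ (c * (‖q‖ ^ 2 + σ ^ 2) + u) ^ 2 := by nlinarith [sq_nonneg u]
      _ = (⟪x, q⟫ + l * s) ^ 2 := by rw [hA]

end InnerProduct

namespace EuclideanSpace

def lastInit (d : ℕ) (z : EuclideanSpace ℝ (Fin (d + 1))) : ℝ × EuclideanSpace ℝ (Fin d) :=
  (z (Fin.last d), WithLp.toLp 2 fun i => z i.castSucc)

theorem measurePreserving_lastInit (d : ℕ) : MeasurePreserving (lastInit d) := by
  convert ((MeasurePreserving.id volume).prod (PiLp.volume_preserving_toLp (Fin d))).comp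
    ((volume_preserving_piFinSuccAbove (fun _ => ℝ) (Fin.last d)).comp
      (PiLp.volume_preserving_ofLp (Fin (d + 1))))
  · ext z <;> simp [lastInit, Fin.init]
  · rfl

theorem inner_eq_inner_lastInit (d : ℕ) (z p : EuclideanSpace ℝ (Fin (d + 1))) :
    ⟪z, p⟫ = ⟪(lastInit d z).2, (lastInit d p).2⟫ + z (Fin.last d) * p (Fin.last d) := by
  simp [lastInit, PiLp.inner_apply, Fin.sum_univ_castSucc, mul_comm]

theorem norm_sq_eq_norm_sq_lastInit (d : ℕ) (z : EuclideanSpace ℝ (Fin (d + 1))) :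
    ‖z‖ ^ 2 = ‖(lastInit d z).2‖ ^ 2 + z (Fin.last d) ^ 2 := by
  rw [← real_inner_self_eq_norm_sq, ← real_inner_self_eq_norm_sq, inner_eq_inner_lastInit, sq]

theorem lastInit_preimage_obliqueCone_subset {d : ℕ} {s r T : ℝ} (hr : 0 ≤ r) (hrs : r < s)
    (hT : T ≤ s - r) (p : EuclideanSpace ℝ (Fin (d + 1))) (hp : p (Fin.last d) = s) :
    lastInit d ⁻¹' obliqueCone ((s / (s ^ 2 - r ^ 2)) • (lastInit d p).2)
        (r / √(s ^ 2 - r ^ 2)) T ⊆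
      {x | ∃ μ ∈ Icc (0 : ℝ) 1, ∃ y ∈ closedBall p r, x = μ • y} ∩
        {x | 0 ≤ x (Fin.last d) ∧ x (Fin.last d) ≤ T} := by
  rintro z ⟨⟨hl₀, hlT⟩, hx⟩
  refine ⟨?_, hl₀, hlT⟩
  obtain ⟨h₀, h₁, h₂⟩ := cone_inequalities_of_mem_closedBall hr hrs hl₀ (hlT.trans hT) hx
  have hpr : ‖p‖ ^ 2 - r ^ 2 = ‖(lastInit d p).2‖ ^ 2 + (s ^ 2 - r ^ 2) := by
    rw [norm_sq_eq_norm_sq_lastInit, hp]; ring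
  have hzp := inner_eq_inner_lastInit d z p
  rw [hp] at hzp
  refine exists_smul_mem_closedBall_of_inner hr (by nlinarith [sq_nonneg ‖(lastInit d p).2‖])
    (hzp ▸ h₀) (hzp ▸ hpr ▸ h₁) ?_
  rw [hpr, hzp, norm_sq_eq_norm_sq_lastInit]
  exact h₂

end EuclideanSpace

theorem stmt_5_general {d : ℕ} (a s r t : ℝ) (hr : 0 ≤ r) (hsr : r < s)
    (ht1 : r ≤ t) (ht2 : t < s)
    (p : EuclideanSpace ℝ (Fin (d + 1)))
    (hp : ∀ i : Fin (d + 1),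
      p i = if i = Fin.last d then s else if i = (0 : Fin (d + 1)) then a else 0) :
    ENNReal.ofReal ((1 / (d + 1 : ℝ)) *
        (volume (Metric.ball (0 : EuclideanSpace ℝ (Fin d)) 1)).toReal *
        r ^ d * (s - t) ^ (d + 1) / (Real.sqrt (s ^ 2 - r ^ 2)) ^ d) ≤
      volume ({x : EuclideanSpace ℝ (Fin (d + 1)) |
          ∃ μ ∈ Set.Icc (0 : ℝ) 1, ∃ y ∈ Metric.closedBall p r, x = μ • y} ∩
        {x : EuclideanSpace ℝ (Fin (d + 1)) |
          0 ≤ x (Fin.last d) ∧ x (Fin.last d) ≤ s - t}) := by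
  set K := obliqueCone ((s / (s ^ 2 - r ^ 2)) • (EuclideanSpace.lastInit d p).2)
    (r / √(s ^ 2 - r ^ 2)) (s - t)
  have hK : volume K = ENNReal.ofReal ((1 / (d + 1 : ℝ)) *
      (volume (ball (0 : EuclideanSpace ℝ (Fin d)) 1)).toReal *
      r ^ d * (s - t) ^ (d + 1) / (Real.sqrt (s ^ 2 - r ^ 2)) ^ d) := by
    rw [Measure.volume_eq_prod, volume_obliqueCone _ _ (by positivity) (by linarith),
      finrank_euclideanSpace_fin, ← ENNReal.ofReal_toReal measure_ball_lt_top.ne,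
      ← ENNReal.ofReal_mul (by positivity), div_pow, ENNReal.toReal_ofReal ENNReal.toReal_nonneg]
    field_simp
  calc _ = volume K := hK.symm
    _ = volume (EuclideanSpace.lastInit d ⁻¹' K) :=
      ((EuclideanSpace.measurePreserving_lastInit d).measure_preimage
        (isClosed_obliqueCone _ _ _).measurableSet.nullMeasurableSet).symm
    _ ≤ _ := measure_mono <| EuclideanSpace.lastInit_preimage_obliqueCone_subset hr hsr
        (by linarith) p (by simp [hp])

/-- Volume lower bound for the truncated cone: the cone with apex at the origin over
`ball(p, r)`, with `p = (a,0,…,0,s)`, intersected with the slab `0 ≤ x_d ≤ s - t`, has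
volume at least `(1/d)·C_{d-1}·r^{d-1}(s-t)^d/(s²-r²)^{(d-1)/2}` (ambient dimension `d+1`
here, so the formula reads with `d+1` in place of `d`). -/
theorem stmt_5 {d : ℕ} (hd : 1 ≤ d) (a s r t : ℝ) (hr : 0 ≤ r) (hsr : r < s)
    (ht1 : r ≤ t) (ht2 : t < s)
    (p : EuclideanSpace ℝ (Fin (d + 1)))
    (hp : ∀ i : Fin (d + 1),
      p i = if i = Fin.last d then s else if i = (0 : Fin (d + 1)) then a else 0) :
    ENNReal.ofReal ((1 / (d + 1 : ℝ)) *
        (volume (Metric.ball (0 : EuclideanSpace ℝ (Fin d)) 1)).toReal *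
        r ^ d * (s - t) ^ (d + 1) / (Real.sqrt (s ^ 2 - r ^ 2)) ^ d) ≤
      volume ({x : EuclideanSpace ℝ (Fin (d + 1)) |
          ∃ μ ∈ Set.Icc (0 : ℝ) 1, ∃ y ∈ Metric.closedBall p r, x = μ • y} ∩
        {x : EuclideanSpace ℝ (Fin (d + 1)) |
          0 ≤ x (Fin.last d) ∧ x (Fin.last d) ≤ s - t}) :=
  stmt_5_general a s r t hr hsr ht1 ht2 p hp
end
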